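/- arXiv:math/0303179 — 2 statements merged into one kernel-verified Lean document; each statement's English description precedes it below -/
import Mathlib

section
/- The subgroup of GL₂(ℤ) generated by the four matrices −I₂, r₋₁, r₀, r₁ is all of GL₂(ℤ); equivalently, every A ∈ GL₂(ℤ) can be written as ± a finite product of the matrices r₋₁, r₀, r₁. (Hence the Weyl group of F, generated by the images of r₋₁, r₀, r₁, is all of PGL₂(ℤ).) -/
open Matrix

/-- The simple reflection `r₋₁` as an element of `GL₂(ℤ)`. -/
def um : GL (Fin 2) ℤ := ⟨!![0, 1; 1, 0], !![0, 1; 1, 0], by decide, by decide⟩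

/-- The simple reflection `r₀` as an element of `GL₂(ℤ)`. -/
def u0 : GL (Fin 2) ℤ := ⟨!![-1, 1; 0, 1], !![-1, 1; 0, 1], by decide, by decide⟩

/-- The simple reflection `r₁` as an element of `GL₂(ℤ)`. -/
def u1 : GL (Fin 2) ℤ := ⟨!![1, 0; 0, -1], !![1, 0; 0, -1], by decide, by decide⟩

/-!
`SL₂(ℤ)` is generated by `S = r₋₁ r₁` and `T = -r₀ r₁`, and `r₁` has determinant `-1`, so the
four matrices generate `GL₂(ℤ)`. All four generators are involutions, so every element is a
product of generators without inverses, and the central factors `-1` can be collected in front.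
-/

open SpecialLinearGroup ModularGroup MatrixGroups

theorem Matrix.GeneralLinearGroup.eq_top_of_range_toGL_le {n R : Type*} [Fintype n]
    [DecidableEq n] [CommRing R] {H : Subgroup (GL n R)} (hSL : toGL.range ≤ H)
    (hdet : ∀ u : Rˣ, ∃ g ∈ H, det g = u) : H = ⊤ := by
  refine (Subgroup.eq_top_iff' H).2 fun A ↦ ?_
  obtain ⟨g, hg, hgA⟩ := hdet (det A)
  have hAg : A * g⁻¹ ∈ H := by
    refine hSL ⟨⟨(A * g⁻¹ : GL n R), ?_⟩, Units.ext rfl⟩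
    rw [← val_det_apply, map_mul, map_inv, hgA, mul_inv_cancel, Units.val_one]
  simpa using H.mul_mem hAg hg

theorem Submonoid.exists_list_of_mem_closure_insert_neg_one {M : Type*} [Monoid M]
    [HasDistribNeg M] {s : Set M} {x : M} (hx : x ∈ Submonoid.closure (insert (-1) s)) :
    ∃ l : List M, (∀ y ∈ l, y ∈ s) ∧ (x = l.prod ∨ x = -l.prod) := by
  induction hx using Submonoid.closure_induction with
  | mem y hy =>
    rcases hy with rfl | hy
    · exact ⟨[], by simp, Or.inr (by simp)⟩
    · exact ⟨[y], by simpa using hy, Or.inl (by simp)⟩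
  | one => exact ⟨[], by simp, Or.inl (by simp)⟩
  | mul y z _ _ hy hz =>
    obtain ⟨l₁, hl₁, hy⟩ := hy
    obtain ⟨l₂, hl₂, hz⟩ := hz
    refine ⟨l₁ ++ l₂, fun w hw ↦ (List.mem_append.1 hw).elim (hl₁ w) (hl₂ w), ?_⟩
    rcases hy with rfl | rfl <;> rcases hz with rfl | rfl <;> simp [List.prod_append]

theorem toGL_S : toGL S = um * u1 := Units.ext (by decide)

theorem toGL_T : toGL T = -1 * (u0 * u1) := Units.ext (by decide)

theorem det_u1 : GeneralLinearGroup.det u1 = -1 := Units.ext (by decide)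

theorem range_toGL_le_closure : toGL.range ≤ Subgroup.closure {-1, um, u0, u1} := by
  have mem (g) (hg : g ∈ ({-1, um, u0, u1} : Set (GL (Fin 2) ℤ))) :
      g ∈ Subgroup.closure {-1, um, u0, u1} := Subgroup.subset_closure hg
  rw [MonoidHom.range_eq_map, ← SL2Z_generators, MonoidHom.map_closure, Subgroup.closure_le]
  rintro _ ⟨g, rfl | rfl, rfl⟩
  · rw [toGL_S]
    exact mul_mem (mem um (by simp)) (mem u1 (by simp))
  · rw [toGL_T]
    exact mul_mem (mem (-1) (by simp)) (mul_mem (mem u0 (by simp)) (mem u1 (by simp)))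

theorem closure_neg_one_um_u0_u1_eq_top : Subgroup.closure {-1, um, u0, u1} = ⊤ := by
  refine GeneralLinearGroup.eq_top_of_range_toGL_le range_toGL_le_closure fun u ↦ ?_
  rcases Int.units_eq_one_or u with rfl | rfl
  · exact ⟨1, one_mem _, map_one _⟩
  · exact ⟨u1, Subgroup.subset_closure (by simp), det_u1⟩

theorem isOfFinOrder_of_mem_generators :
    ∀ g ∈ ({-1, um, u0, u1} : Set (GL (Fin 2) ℤ)), IsOfFinOrder g := by
  rintro g (rfl | rfl | rfl | rfl) <;>
    exact isOfFinOrder_iff_pow_eq_one.2 ⟨2, two_pos, Units.ext (by decide)⟩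

/-- The subgroup of `GL₂(ℤ)` generated by `-I₂, r₋₁, r₀, r₁` is all of `GL₂(ℤ)`;
equivalently, every `A ∈ GL₂(ℤ)` is `±` a finite product of `r₋₁, r₀, r₁`. Hence the
Weyl group of `F`, generated by the images of `r₋₁, r₀, r₁`, is all of `PGL₂(ℤ)`. -/
theorem stmt_7 :
    Subgroup.closure {(-1 : GL (Fin 2) ℤ), um, u0, u1} = ⊤ ∧
    (∀ A : GL (Fin 2) ℤ, ∃ l : List (GL (Fin 2) ℤ),
      (∀ x ∈ l, x ∈ ({um, u0, u1} : Set (GL (Fin 2) ℤ))) ∧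
      (A = l.prod ∨ A = -l.prod)) := by
  refine ⟨closure_neg_one_um_u0_u1_eq_top, fun A ↦ ?_⟩
  have hA : A ∈ Submonoid.closure {-1, um, u0, u1} := by
    rw [← Subgroup.closure_toSubmonoid_of_isOfFinOrder isOfFinOrder_of_mem_generators,
      closure_neg_one_um_u0_u1_eq_top]
    trivial
  exact Submonoid.exists_list_of_mem_closure_insert_neg_one hA
end

section
/- Fix an integer m ≥ 1 and a sign ±. Set β₀ = α₋₁ and β₁ = m(α₀ + α₁) ± α₁ = [[−m, ±1],[±1, 0]]. Then β₀ and β₁ are positive real roots of F (each has determinant −1 and is a nonnegative integer combination of the simple roots), the difference β₁ − β₀ = [[−m−1, ±1],[±1, 1]] has determinant −m−2 < −1 and hence does not lie in Φ, and the Gram matrix [[B(β₀,β₀), B(β₀,β₁)],[B(β₁,β₀), B(β₁,β₁)]] equals [[2, −m],[−m, 2]]. (These are the simple-root data of the rank 2 Kac–Moody subalgebra H(m) of F, which is hyperbolic for m ≥ 3.) -/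
open Matrix

/-- The symmetric bilinear form `B(N,N') = 2bb' - ac' - a'c` on 2×2 integer matrices. -/
def B (N M : Matrix (Fin 2) (Fin 2) ℤ) : ℤ :=
  2 * N 0 1 * M 0 1 - N 0 0 * M 1 1 - M 0 0 * N 1 1

/-- The simple root `α₋₁` of `F`. -/
def αm : Matrix (Fin 2) (Fin 2) ℤ := !![1, 0; 0, -1]

/-- The simple root `α₀` of `F`. -/
def α0 : Matrix (Fin 2) (Fin 2) ℤ := !![-1, -1; -1, 0]

/-- The simple root `α₁` of `F`. -/
def α1 : Matrix (Fin 2) (Fin 2) ℤ := !![0, 1; 1, 0]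

/-- The set of roots `Φ` of `F`. -/
def Phi : Set (Matrix (Fin 2) (Fin 2) ℤ) :=
  {N | N.IsSymm ∧ N ≠ 0 ∧ -1 ≤ N.det}

/-- `N` is a positive root of `F`: a nonzero nonnegative integer combination of the
simple roots. -/
def IsPositiveRoot (N : Matrix (Fin 2) (Fin 2) ℤ) : Prop :=
  N ≠ 0 ∧ ∃ x y z : ℕ, N = (x : ℤ) • αm + (y : ℤ) • α0 + (z : ℤ) • α1

/-- `N` is a positive real root of `F`: a positive root with `det N = -1`. -/
def IsPositiveRealRoot (N : Matrix (Fin 2) (Fin 2) ℤ) : Prop :=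
  IsPositiveRoot N ∧ N.det = -1

/-
The proof is a direct computation. The only inputs are `ε² = 1`, giving `det β₁ = -ε² = -1` and
`det (β₁ - β₀) = -(m + 1) - ε² = -m - 2`, and `m ± 1 ≥ 0`, which makes
`β₁ = m α₀ + (m ± 1) α₁` a nonnegative combination. Since `B(N, N) = -2 det N` on symmetric
matrices, every real root has `B(N, N) = 2`.
-/

theorem B_comm (N M : Matrix (Fin 2) (Fin 2) ℤ) : B N M = B M N := by
  unfold B; ring

theorem B_self_of_isSymm {N : Matrix (Fin 2) (Fin 2) ℤ} (hN : N.IsSymm) : B N N = -2 * N.det := by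
  rw [B, det_fin_two, hN.apply 0 1]
  ring

theorem isSymm_αm : αm.IsSymm := by decide

theorem isSymm_α0 : α0.IsSymm := by decide

theorem isSymm_α1 : α1.IsSymm := by decide

theorem IsPositiveRoot.isSymm {N : Matrix (Fin 2) (Fin 2) ℤ} (hN : IsPositiveRoot N) :
    N.IsSymm := by
  obtain ⟨-, x, y, z, rfl⟩ := hN
  exact ((isSymm_αm.smul _).add (isSymm_α0.smul _)).add (isSymm_α1.smul _)

theorem IsPositiveRealRoot.B_self {N : Matrix (Fin 2) (Fin 2) ℤ} (hN : IsPositiveRealRoot N) :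
    B N N = 2 := by
  rw [B_self_of_isSymm hN.1.isSymm, hN.2]
  rfl

theorem smul_αm_add_smul_α0_add_smul_α1 (x y z : ℤ) :
    x • αm + y • α0 + z • α1 = !![x - y, z - y; z - y, -x] := by
  ext i j
  fin_cases i <;> fin_cases j <;> simp [αm, α0, α1] <;> ring

theorem isPositiveRoot_of_nonneg {x y z : ℤ} (hx : 0 ≤ x) (hy : 0 ≤ y) (hz : 0 ≤ z)
    (hpos : 0 < x + y + z) : IsPositiveRoot !![x - y, z - y; z - y, -x] := by
  refine ⟨fun h => ?_, x.toNat, y.toNat, z.toNat, ?_⟩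
  · have h00 := congrFun (congrFun h 0) 0
    have h01 := congrFun (congrFun h 0) 1
    have h11 := congrFun (congrFun h 1) 1
    simp only [of_apply, cons_val', cons_val_zero, cons_val_one, cons_val_fin_one,
      Matrix.zero_apply, neg_eq_zero] at h00 h01 h11
    omega
  · simp only [Int.toNat_of_nonneg, hx, hy, hz, smul_αm_add_smul_α0_add_smul_α1]

theorem isPositiveRealRoot_αm : IsPositiveRealRoot αm := by
  refine ⟨?_, by decide⟩
  simpa [αm] using
    isPositiveRoot_of_nonneg (x := 1) (y := 0) (z := 0) zero_le_one le_rfl le_rfl one_pos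

theorem smul_α0_add_α1_add_smul_α1 (m ε : ℤ) :
    m • (α0 + α1) + ε • α1 = !![-m, ε; ε, 0] := by
  rw [smul_add, add_assoc, ← add_smul]
  simpa using smul_αm_add_smul_α0_add_smul_α1 0 m (m + ε)

theorem isPositiveRealRoot_of_sq_eq_one {m ε : ℤ} (hm : 1 ≤ m) (hε : ε * ε = 1) :
    IsPositiveRealRoot !![-m, ε; ε, 0] := by
  have hmε : 0 ≤ m + ε := by nlinarith
  refine ⟨?_, by rw [det_fin_two_of]; linear_combination -hε⟩
  simpa using isPositiveRoot_of_nonneg (x := 0) (y := m) (z := m + ε) le_rfl (by omega) hmε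
    (by omega)

theorem not_mem_Phi_of_det_lt {N : Matrix (Fin 2) (Fin 2) ℤ} (h : N.det < -1) : N ∉ Phi :=
  fun hN => absurd hN.2.2 (not_le.2 h)

/-- Simple-root data of the rank 2 Kac–Moody subalgebra `H(m)` of `F`: for `m ≥ 1` and
a sign `ε = ±1`, the elements `β₀ = α₋₁` and `β₁ = m(α₀+α₁) ± α₁ = [[-m,±1],[±1,0]]`
are positive real roots of `F`, the difference `β₁ - β₀ = [[-m-1,±1],[±1,1]]` has
determinant `-m-2 < -1` and hence is not in `Φ`, and the Gram matrix is
`[[2,-m],[-m,2]]` (hyperbolic for `m ≥ 3`). -/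
theorem stmt_8 (m : ℤ) (hm : 1 ≤ m) (ε : ℤ) (hε : ε = 1 ∨ ε = -1)
    (β₀ β₁ : Matrix (Fin 2) (Fin 2) ℤ)
    (hβ₀ : β₀ = αm) (hβ₁ : β₁ = m • (α0 + α1) + ε • α1) :
    β₁ = !![-m, ε; ε, 0] ∧
    IsPositiveRealRoot β₀ ∧ IsPositiveRealRoot β₁ ∧
    β₁ - β₀ = !![-m - 1, ε; ε, 1] ∧
    (β₁ - β₀).det = -m - 2 ∧ (β₁ - β₀).det < -1 ∧ β₁ - β₀ ∉ Phi ∧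
    B β₀ β₀ = 2 ∧ B β₀ β₁ = -m ∧ B β₁ β₀ = -m ∧ B β₁ β₁ = 2 := by
  have hε2 : ε * ε = 1 := by rcases hε with rfl | rfl <;> rfl
  rw [smul_α0_add_α1_add_smul_α1] at hβ₁
  subst hβ₀ hβ₁
  have hdiff : !![-m, ε; ε, 0] - αm = !![-m - 1, ε; ε, 1] := by
    ext i j; fin_cases i <;> fin_cases j <;> simp [αm]
  have hdet : (!![-m, ε; ε, 0] - αm).det = -m - 2 := by
    rw [hdiff, det_fin_two_of]; linear_combination -hε2
  have hBm : B αm !![-m, ε; ε, 0] = -m := by simp [B, αm]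
  have hreal := isPositiveRealRoot_of_sq_eq_one hm hε2
  exact ⟨rfl, isPositiveRealRoot_αm, hreal, hdiff, hdet, by omega,
    not_mem_Phi_of_det_lt (by omega), isPositiveRealRoot_αm.B_self, hBm, B_comm _ _ ▸ hBm,
    hreal.B_self⟩
end
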